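/- For a simple symmetric random walk on ℤ started at 0, lim_{m→∞} √m · P(S_l > S_0 for all 0 < l ≤ m) = 1/√(2π). -/

import Mathlib

/-!
By independence each of the `2 ^ m` sign patterns of the first `m` steps has probability
`2 ^ (-m)`, so the probability equals the number of positive `±1` paths of length `m` divided
by `2 ^ m`. Sorted by their number `r + 1` of up-steps, positive paths of length `m + 1` satisfy
Pascal's recurrence, which gives the ballot count `C(m, r) - C(m, r + 1)`; summing over `r`
telescopes to `C(m - 1, ⌊m / 2⌋)` paths of length `m`. With `n = ⌊m / 2⌋` this count over
`2 ^ m` is `C(2n, n) / (2 * 4 ^ n)`, and Wallis' product gives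
`√(2n + 1) * C(2n, n) / 4 ^ n → √(2 / π)`.
-/

open MeasureTheory ProbabilityTheory Filter Topology Finset Real

lemma sq_centralBinom_div_four_pow (n : ℕ) :
    (2 * n + 1) * ((Nat.centralBinom n : ℝ) / 4 ^ n) ^ 2 = (Wallis.W n)⁻¹ := by
  rw [Wallis.W_eq_factorial_ratio, Nat.centralBinom_eq_two_mul_choose,
    Nat.cast_choose ℝ (by omega : n ≤ 2 * n), show 2 * n - n = n by omega,
    show (4 : ℝ) ^ n = 2 ^ (2 * n) by rw [pow_mul]; norm_num]
  field_simp
  ring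

theorem tendsto_sqrt_mul_centralBinom_div_four_pow :
    Tendsto (fun n : ℕ => √(2 * n + 1) * Nat.centralBinom n / 4 ^ n) atTop (𝓝 √(2 / π)) := by
  have hW : Tendsto (fun n => (Wallis.W n)⁻¹) atTop (𝓝 (2 / π)) := by
    simpa only [inv_div] using Wallis.tendsto_W_nhds_pi_div_two.inv₀ (by positivity)
  refine hW.sqrt.congr fun n => ?_
  rw [← sq_centralBinom_div_four_pow, sqrt_mul (by positivity), sqrt_sq (by positivity),
    mul_div_assoc]

lemma tendsto_natCast_div_two_mul_div_two_add_one :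
    Tendsto (fun m : ℕ => (m : ℝ) / (2 * (m / 2 : ℕ) + 1)) atTop (𝓝 1) := by
  refine tendsto_of_tendsto_of_tendsto_of_le_of_le (tendsto_natCast_div_add_atTop (1 : ℝ))
    tendsto_const_nhds (fun m => ?_) (fun m => ?_)
  · have : (2 * (m / 2 : ℕ) : ℝ) ≤ m := by exact_mod_cast Nat.mul_div_le m 2
    dsimp only
    gcongr
  · have : (m : ℝ) ≤ 2 * (m / 2 : ℕ) + 1 := by exact_mod_cast (by omega : m ≤ 2 * (m / 2) + 1)
    exact div_le_one_of_le₀ this (by positivity)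

lemma choose_half_div_two_pow {m : ℕ} (hm : m ≠ 0) :
    ((m - 1).choose (m / 2) : ℝ) / 2 ^ m = Nat.centralBinom (m / 2) / (2 * 4 ^ (m / 2)) := by
  suffices h : (m - 1).choose (m / 2) * (2 * 4 ^ (m / 2)) = Nat.centralBinom (m / 2) * 2 ^ m by
    rw [div_eq_div_iff (by positivity) (by positivity)]
    exact_mod_cast h
  have h4 : (4 : ℕ) = 2 ^ 2 := rfl
  rcases Nat.even_or_odd' m with ⟨n, rfl | rfl⟩
  · obtain ⟨j, rfl⟩ : ∃ j, n = j + 1 := ⟨n - 1, by omega⟩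
    have hcentral : Nat.centralBinom (j + 1) = 2 * (2 * j + 1).choose (j + 1) := by
      rw [Nat.centralBinom_eq_two_mul_choose, show 2 * (j + 1) = 2 * j + 1 + 1 by ring,
        Nat.choose_succ_succ', Nat.choose_symm_half]
      ring
    rw [show 2 * (j + 1) - 1 = 2 * j + 1 by omega, Nat.mul_div_cancel_left _ two_pos, hcentral,
      h4, ← pow_mul]
    ring
  · rw [Nat.add_sub_cancel, show (2 * n + 1) / 2 = n by omega, Nat.centralBinom_eq_two_mul_choose,
      h4, ← pow_mul, pow_succ]
    ring

theorem Finset.sum_range_add_eq_of_add_eq {M : Type*} [AddCommMonoid M] {f g : ℕ → M} {n : ℕ}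
    (h : ∀ i < n, f i + g (i + 1) = g i) : ∑ i ∈ range n, f i + g n = g 0 := by
  induction n with
  | zero => simp
  | succ n ih =>
    rw [sum_range_succ, add_assoc, h n n.lt_succ_self]
    exact ih fun i hi => h i (by omega)

lemma sum_range_eq_of_forall_eq_one_or_eq_neg_one {x : ℕ → ℤ} {l : ℕ}
    (hx : ∀ i < l, x i = 1 ∨ x i = -1) :
    ∑ i ∈ range l, x i = 2 * #{i ∈ range l | x i = 1} - l := by
  have hdown : ∀ i ∈ range l, ¬x i = 1 → x i = -1 := fun i hi hi1 =>
    (hx i (mem_range.mp hi)).resolve_left hi1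
  have hcard := card_filter_add_card_filter_not (s := range l) (x · = 1)
  rw [card_range] at hcard
  rw [← sum_filter_add_sum_filter_not (range l) (x · = 1),
    sum_congr rfl fun i hi => (mem_filter.mp hi).2,
    sum_congr rfl fun i hi => hdown i (mem_filter.mp hi).1 (mem_filter.mp hi).2]
  simp only [sum_const, nsmul_eq_mul, mul_one, mul_neg]
  omega

namespace SimpleRandomWalk

/-- `A ⊆ range m` is the set of up-steps of a `±1` path of length `m`; the path is at height
`2 * #(A ∩ range l) - l` at time `l`. -/
def IsPositivePath (m : ℕ) (A : Finset ℕ) : Prop :=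
  ∀ l ∈ Icc 1 m, l < 2 * #(A ∩ range l)

instance (m : ℕ) : DecidablePred (IsPositivePath m) :=
  fun _ => inferInstanceAs (Decidable (∀ _ ∈ _, _))

def positivePaths (m : ℕ) : Finset (Finset ℕ) := (range m).powerset.filter (IsPositivePath m)

lemma mem_positivePaths {m : ℕ} {A : Finset ℕ} :
    A ∈ positivePaths m ↔ A ⊆ range m ∧ IsPositivePath m A := by
  rw [positivePaths, mem_filter, mem_powerset]

def positivePathsWithUps (m r : ℕ) : Finset (Finset ℕ) :=
  (powersetCard r (range m)).filter (IsPositivePath m)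

lemma isPositivePath_succ_iff {m : ℕ} {A : Finset ℕ} (hA : A ⊆ range (m + 1)) :
    IsPositivePath (m + 1) A ↔ IsPositivePath m A ∧ m + 1 < 2 * #A := by
  have hAm : A ∩ range (m + 1) = A := inter_eq_left.mpr hA
  constructor
  · intro h
    exact ⟨fun l hl => h l (by simp at hl ⊢; omega), hAm ▸ h (m + 1) (by simp)⟩
  · rintro ⟨h, hlast⟩ l hl
    rcases (mem_Icc.mp hl).2.lt_or_eq with hlt | rfl
    · exact h l (by simp at hl ⊢; omega)
    · rwa [hAm]

lemma isPositivePath_insert_iff {m : ℕ} {A : Finset ℕ} :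
    IsPositivePath m (insert m A) ↔ IsPositivePath m A := by
  have hinter : ∀ l ∈ Icc 1 m, insert m A ∩ range l = A ∩ range l := fun l hl =>
    insert_inter_of_notMem (by simp at hl ⊢; omega)
  exact forall₂_congr fun l hl => by rw [hinter l hl]

lemma card_positivePathsWithUps_zero_left (r : ℕ) :
    #(positivePathsWithUps 0 r) = (0 : ℕ).choose r := by
  rw [positivePathsWithUps, filter_true_of_mem fun A _ l hl => by simp at hl,
    card_powersetCard, card_range]

lemma card_positivePathsWithUps_eq_zero {m r : ℕ} (hm : 0 < m) (hr : 2 * r ≤ m) :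
    #(positivePathsWithUps m r) = 0 := by
  refine card_eq_zero.mpr (filter_false_of_mem fun A hA hpos => ?_)
  obtain ⟨hAm, rfl⟩ := mem_powersetCard.mp hA
  have := hpos m (by simp; omega)
  rw [inter_eq_left.mpr hAm] at this
  omega

lemma card_positivePathsWithUps_succ_succ {m r : ℕ} (h : m + 1 < 2 * (r + 1)) :
    #(positivePathsWithUps (m + 1) (r + 1)) =
      #(positivePathsWithUps m (r + 1)) + #(positivePathsWithUps m r) := by
  have hm : m ∉ range m := notMem_range_self
  have hstay : (powersetCard (r + 1) (range m)).filter (IsPositivePath (m + 1)) =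
      positivePathsWithUps m (r + 1) := by
    refine filter_congr fun A hA => ?_
    obtain ⟨hAm, hcard⟩ := mem_powersetCard.mp hA
    rw [isPositivePath_succ_iff (hAm.trans (range_subset_range.mpr m.le_succ)), hcard]
    exact and_iff_left h
  have hup : (powersetCard r (range m)).filter (fun B => IsPositivePath (m + 1) (insert m B)) =
      positivePathsWithUps m r := by
    refine filter_congr fun B hB => ?_
    obtain ⟨hBm, hcard⟩ := mem_powersetCard.mp hB
    have hmB : m ∉ B := fun h => hm (hBm h)
    rw [isPositivePath_succ_iff (range_add_one ▸ insert_subset_insert m hBm),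
      isPositivePath_insert_iff, card_insert_of_notMem hmB, hcard]
    exact and_iff_left h
  have hinj : Set.InjOn (insert m) (positivePathsWithUps m r : Set (Finset ℕ)) :=
    fun A hA B hB hAB => by
      simp only [positivePathsWithUps, coe_filter, mem_powersetCard] at hA hB
      rw [← erase_insert fun h => hm (hA.1.1 h), hAB, erase_insert fun h => hm (hB.1.1 h)]
  have hdisj : Disjoint (positivePathsWithUps m (r + 1))
      ((positivePathsWithUps m r).image (insert m)) := by
    refine disjoint_left.mpr fun A hA hA' => ?_
    obtain ⟨B, -, rfl⟩ := mem_image.mp hA'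
    exact hm ((mem_powersetCard.mp (mem_filter.mp hA).1).1 (mem_insert_self m B))
  rw [positivePathsWithUps, range_add_one, powersetCard_succ_insert hm, filter_union, filter_image,
    Nat.succ_eq_add_one, hstay, hup, card_union_of_disjoint hdisj, card_image_of_injOn hinj]

/-- The ballot count `C(m, r) - C(m, r + 1)`, written without subtraction. -/
lemma card_positivePathsWithUps_add_choose {m r : ℕ} (h : m ≤ 2 * r) :
    #(positivePathsWithUps (m + 1) (r + 1)) + m.choose (r + 1) = m.choose r := by
  induction m generalizing r with
  | zero =>
    rw [card_positivePathsWithUps_succ_succ (by omega), card_positivePathsWithUps_zero_left,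
      card_positivePathsWithUps_zero_left]
    simp [Nat.choose_zero_succ]
  | succ m ih =>
    obtain ⟨s, rfl⟩ : ∃ s, r = s + 1 := ⟨r - 1, by omega⟩
    have htop := ih (r := s + 1) (by omega)
    rw [card_positivePathsWithUps_succ_succ (by omega), Nat.choose_succ_succ' m (s + 1),
      Nat.choose_succ_succ' m s]
    rcases le_or_gt m (2 * s) with hms | hms
    · have := ih hms
      omega
    · obtain rfl : m = 2 * s + 1 := by omega
      rw [card_positivePathsWithUps_eq_zero (m := 2 * s + 1 + 1) (r := s + 1) (by omega)
        (by omega)]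
      have := Nat.choose_symm_half s
      omega

lemma card_positivePaths_eq_sum (m : ℕ) :
    #(positivePaths m) = ∑ r ∈ range (m + 1), #(positivePathsWithUps m r) := by
  have hmaps : (positivePaths m : Set (Finset ℕ)).MapsTo card (range (m + 1)) := fun A hA => by
    have := card_le_card (mem_positivePaths.mp hA).1
    rw [card_range] at this
    simpa [Nat.lt_succ_iff] using this
  rw [card_eq_sum_card_fiberwise hmaps]
  refine sum_congr rfl fun r _ => congrArg card ?_
  ext A
  simp only [mem_positivePaths, positivePathsWithUps, mem_filter, mem_powersetCard]
  tauto

theorem card_positivePaths (m : ℕ) : #(positivePaths m) = (m - 1).choose (m / 2) := by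
  rcases m with _ | n
  · rfl
  set c := (n + 1) / 2
  have hsplit : n + 1 + 1 = (c + 1) + (n + 1 - c) := by omega
  have hlow : ∑ r ∈ range (c + 1), #(positivePathsWithUps (n + 1) r) = 0 :=
    sum_eq_zero fun r hr => card_positivePathsWithUps_eq_zero n.succ_pos (by simp at hr; omega)
  have htelescope := sum_range_add_eq_of_add_eq (n := n + 1 - c)
    (f := fun j => #(positivePathsWithUps (n + 1) (c + 1 + j))) (g := fun j => n.choose (c + j))
    fun j _ => by
      rw [add_right_comm c, ← add_assoc]
      exact card_positivePathsWithUps_add_choose (by omega)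
  simp only [add_zero, Nat.choose_eq_zero_of_lt (show n < c + (n + 1 - c) by omega)] at htelescope
  rw [card_positivePaths_eq_sum, hsplit, sum_range_add, hlow, zero_add, htelescope,
    Nat.add_sub_cancel]

section Probability

variable {Ω : Type*} {X : ℕ → Ω → ℤ}

def upSteps (X : ℕ → Ω → ℤ) (m : ℕ) (ω : Ω) : Finset ℕ := {i ∈ range m | X i ω = 1}

lemma upSteps_subset_range (m : ℕ) (ω : Ω) : upSteps X m ω ⊆ range m := filter_subset _ _

lemma upSteps_inter_range {m l : ℕ} (hl : l ≤ m) (ω : Ω) :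
    upSteps X m ω ∩ range l = upSteps X l ω := by
  ext i
  simp only [upSteps, mem_inter, mem_filter, mem_range]
  omega

lemma upSteps_preimage_singleton {m : ℕ} {A : Finset ℕ} (hA : A ⊆ range m) :
    upSteps X m ⁻¹' {A} = ⋂ i ∈ range m, X i ⁻¹' (if i ∈ A then {1} else {1}ᶜ) := by
  ext ω
  simp only [Set.mem_preimage, Set.mem_singleton_iff, Set.mem_iInter]
  constructor
  · rintro rfl i hi
    split_ifs with h <;> simp_all [upSteps]
  · intro h
    ext i
    by_cases hi : i ∈ range m
    · have := h i hi
      split_ifs at this with hiA <;> simp_all [upSteps]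
    · simp only [upSteps, mem_filter, hi, false_and, false_iff]
      exact fun hiA => hi (hA hiA)

lemma forall_sum_range_pos_iff {ω : Ω} (hω : ∀ i, X i ω = 1 ∨ X i ω = -1) {m : ℕ} :
    (∀ l, 0 < l → l ≤ m → 0 < ∑ i ∈ range l, X i ω) ↔ upSteps X m ω ∈ positivePaths m := by
  rw [mem_positivePaths, and_iff_right (upSteps_subset_range m ω)]
  refine forall_congr' fun l => ?_
  rw [mem_Icc, and_imp, Nat.one_le_iff_ne_zero, ← Nat.pos_iff_ne_zero]
  refine imp_congr_right fun _ => imp_congr_right fun hlm => ?_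
  rw [sum_range_eq_of_forall_eq_one_or_eq_neg_one fun i _ => hω i, upSteps_inter_range hlm,
    upSteps]
  omega

variable [MeasurableSpace Ω] {P : Measure Ω}

lemma measurableSet_upSteps_preimage_singleton (hX : ∀ i, Measurable (X i)) {m : ℕ}
    {A : Finset ℕ} (hA : A ⊆ range m) : MeasurableSet (upSteps X m ⁻¹' {A}) := by
  rw [upSteps_preimage_singleton hA]
  refine .biInter (Set.to_countable _) fun i _ => hX i ?_
  split_ifs
  exacts [measurableSet_singleton 1, (measurableSet_singleton 1).compl]

variable [IsProbabilityMeasure P]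

lemma measure_upSteps_preimage_singleton (hX : ∀ i, Measurable (X i)) (hindep : iIndepFun X P)
    (h1 : ∀ i, P {ω | X i ω = 1} = 1 / 2) {m : ℕ} {A : Finset ℕ} (hA : A ⊆ range m) :
    P (upSteps X m ⁻¹' {A}) = 2⁻¹ ^ m := by
  have hhalf : ∀ i, P (X i ⁻¹' {1}) = 2⁻¹ := fun i => by rw [← one_div, ← h1 i]; rfl
  rw [upSteps_preimage_singleton hA, hindep.measure_inter_preimage_eq_mul _ fun i _ => by
      split_ifs
      exacts [measurableSet_singleton 1, (measurableSet_singleton 1).compl]]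
  rw [prod_congr rfl fun i _ => ?_, prod_const, card_range]
  split_ifs
  · exact hhalf i
  · rw [Set.preimage_compl, prob_compl_eq_one_sub (hX i (measurableSet_singleton 1)), hhalf i,
      ENNReal.one_sub_inv_two]

lemma ae_eq_one_or_eq_neg_one (hX : ∀ i, Measurable (X i))
    (h1 : ∀ i, P {ω | X i ω = 1} = 1 / 2) (h2 : ∀ i, P {ω | X i ω = -1} = 1 / 2) :
    ∀ᵐ ω ∂P, ∀ i, X i ω = 1 ∨ X i ω = -1 := by
  refine ae_all_iff.mpr fun i => ?_
  have hmeas : ∀ c : ℤ, MeasurableSet {ω | X i ω = c} := fun c => hX i (measurableSet_singleton c)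
  have hdisj : Disjoint {ω | X i ω = 1} {ω | X i ω = -1} :=
    Set.disjoint_left.mpr fun ω h h' => by simp_all
  rw [ae_iff, ← Set.compl_ofPred, Set.ofPred_or,
    prob_compl_eq_zero_iff ((hmeas 1).union (hmeas (-1))), measure_union hdisj (hmeas (-1)), h1,
    h2, ENNReal.add_halves]

theorem measure_forall_sum_range_pos (hX : ∀ i, Measurable (X i)) (hindep : iIndepFun X P)
    (h1 : ∀ i, P {ω | X i ω = 1} = 1 / 2) (h2 : ∀ i, P {ω | X i ω = -1} = 1 / 2) (m : ℕ) :
    P {ω | ∀ l, 0 < l → l ≤ m → 0 < ∑ i ∈ range l, X i ω} = #(positivePaths m) * 2⁻¹ ^ m := by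
  have hevent : {ω | ∀ l, 0 < l → l ≤ m → 0 < ∑ i ∈ range l, X i ω} =ᵐ[P]
      upSteps X m ⁻¹' positivePaths m := by
    filter_upwards [ae_eq_one_or_eq_neg_one hX h1 h2] with ω hω
    exact propext (forall_sum_range_pos_iff hω)
  rw [measure_congr hevent, ← sum_measure_preimage_singleton (positivePaths m) fun A hA =>
    measurableSet_upSteps_preimage_singleton hX (mem_positivePaths.mp hA).1,
    sum_congr rfl fun A hA =>
      measure_upSteps_preimage_singleton hX hindep h1 (mem_positivePaths.mp hA).1,
    sum_const, nsmul_eq_mul]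

end Probability

end SimpleRandomWalk

theorem stmt11 {Ω : Type*} [MeasurableSpace Ω] (P : Measure Ω) [IsProbabilityMeasure P]
    (X : ℕ → Ω → ℤ) (hX : ∀ i, Measurable (X i))
    (hindep : iIndepFun X P)
    (h1 : ∀ i, P {ω | X i ω = 1} = 1/2)
    (h2 : ∀ i, P {ω | X i ω = -1} = 1/2)
    (S : ℕ → Ω → ℤ) (hS : ∀ n ω, S n ω = ∑ i ∈ Finset.range n, X i ω) :
    Tendsto (fun m : ℕ =>
        Real.sqrt m * (P {ω | ∀ l, 0 < l → l ≤ m → S 0 ω < S l ω}).toReal)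
      atTop (nhds (1 / Real.sqrt (2 * Real.pi))) := by
  have hprob (m : ℕ) : (P {ω | ∀ l, 0 < l → l ≤ m → S 0 ω < S l ω}).toReal =
      ((m - 1).choose (m / 2) : ℝ) / 2 ^ m := by
    simp only [hS, range_zero, sum_empty]
    rw [SimpleRandomWalk.measure_forall_sum_range_pos hX hindep h1 h2,
      SimpleRandomWalk.card_positivePaths]
    simp [div_eq_mul_inv]
  have hlim := ((tendsto_natCast_div_two_mul_div_two_add_one.sqrt.const_mul 2⁻¹).mul
    (tendsto_sqrt_mul_centralBinom_div_four_pow.comp (map_div_atTop_eq_nat 2 two_pos).le))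
  have hval : 2⁻¹ * √1 * √(2 / π) = 1 / √(2 * π) := by
    have := sq_sqrt (zero_le_two : (0 : ℝ) ≤ 2)
    rw [sqrt_one, sqrt_div zero_le_two, sqrt_mul zero_le_two]
    field_simp
    linarith
  rw [← hval]
  refine hlim.congr' ?_
  filter_upwards [eventually_ne_atTop 0] with m hm
  simp only [Function.comp_apply, hprob, choose_half_div_two_pow hm, sqrt_div (Nat.cast_nonneg m)]
  field_simp
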